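/- arXiv:math/9705230 — 5 statements merged into one kernel-verified Lean document; each statement's English description precedes it below -/
import Mathlib

section
/- Let Γ be a finite group, B a set with a free Γ-action, k a natural number, and H an unordered k-tuple (multiset of size k) of elements of B. Then the order of the stabilizer subgroup Stab(H) = {γ ∈ Γ : γ·H = H} divides k. -/
/-!
The stabilizer of `H` preserves multiplicities, so it acts on the enumeration
`{(b, i) | i < count b H}` of `H` through the first coordinate, and this action is free because
the action on `B` is. A set with a free action is a disjoint union of copies of the group, so
`|Stab H|` divides the number `k` of elements of the enumeration.
-/

open MulAction

theorem MulAction.card_dvd_card_of_free {G X : Type*} [Group G] [MulAction G X]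
    (hfree : ∀ (g : G) (x : X), g • x = x → g = 1) : Nat.card G ∣ Nat.card X := by
  have hstab : ∀ x : X, stabilizer G x = ⊥ := fun x =>
    (Subgroup.eq_bot_iff_forall _).2 fun g hg => hfree g x hg
  rw [Nat.card_congr (selfEquivOrbitsQuotientProd hstab), Nat.card_prod]
  exact dvd_mul_left _ _

namespace Multiset

variable {G B : Type*} [Group G] [MulAction G B]

instance : MulAction G (Multiset B) where
  smul g m := m.map (g • ·)
  one_smul m := (map_congr rfl fun b _ => one_smul G b).trans m.map_id
  mul_smul g h m := (map_congr rfl fun b _ => mul_smul g h b).trans (map_map _ _ m).symm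

theorem smul_def (g : G) (m : Multiset B) : g • m = m.map (g • ·) := rfl

theorem count_smul [DecidableEq B] (g : G) (m : Multiset B) (b : B) :
    count b (g • m) = count (g⁻¹ • b) m := by
  rw [smul_def, ← count_map_eq_count' _ m (MulAction.injective g), smul_inv_smul]

theorem count_smul_of_mem_stabilizer [DecidableEq B] {m : Multiset B} {g : G}
    (hg : g ∈ stabilizer G m) (b : B) : count (g • b) m = count b m := by
  conv_lhs => rw [← mem_stabilizer_iff.1 hg]
  rw [count_smul, inv_smul_smul]

instance [DecidableEq B] (m : Multiset B) : MulAction (stabilizer G m) m.toEnumFinset where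
  smul g p := ⟨((g : G) • p.1.1, p.1.2), by
    rw [mem_toEnumFinset, count_smul_of_mem_stabilizer g.2]
    exact (mem_toEnumFinset _ _).1 p.2⟩
  one_smul p := Subtype.ext (Prod.ext (one_smul G p.1.1) rfl)
  mul_smul g h p := Subtype.ext (Prod.ext (mul_smul (g : G) h p.1.1) rfl)

theorem card_stabilizer_dvd_card (hfree : ∀ (g : G) (b : B), g • b = b → g = 1)
    (m : Multiset B) : Nat.card (stabilizer G m) ∣ card m := by
  classical
  have := card_dvd_card_of_free (G := stabilizer G m) (X := m.toEnumFinset) fun g p hgp =>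
    Subtype.ext (hfree g p.1.1 (congrArg (·.1.1) hgp))
  rwa [Nat.card_eq_finsetCard, card_toEnumFinset] at this

end Multiset

theorem stmt0_general (Γ : Type*) [Group Γ] (B : Type*) [MulAction Γ B]
    (hfree : ∀ (γ : Γ) (b : B), γ • b = b → γ = 1)
    (k : ℕ) (H : Multiset B) (hH : Multiset.card H = k) :
    Nat.card {γ : Γ // Multiset.map (fun b => γ • b) H = H} ∣ k :=
  hH ▸ Multiset.card_stabilizer_dvd_card hfree H

/-- Let `Γ` be a finite group acting freely on a set `B`, `k` a natural
number, and `H` an unordered `k`-tuple (multiset of size `k`) of elements of `B`. Then the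
order of the stabilizer `{γ : Γ | γ • H = H}` (where `γ` acts on multisets elementwise)
divides `k`. -/
theorem stmt0 (Γ : Type*) [Group Γ] [Fintype Γ] (B : Type*) [MulAction Γ B]
    (hfree : ∀ (γ : Γ) (b : B), γ • b = b → γ = 1)
    (k : ℕ) (H : Multiset B) (hH : Multiset.card H = k) :
    Nat.card {γ : Γ // Multiset.map (fun b => γ • b) H = H} ∣ k :=
  stmt0_general Γ B hfree k H hH
end

section
/- Let Γ be a finite group and χ a complex character of Γ. Define the class function ψ̂^k(χ) on Γ by ψ̂^k(χ)(γ) = Σ_{τ ∈ Γ, τ^k = γ} χ(τ). Then for every character θ of Γ, the inner product ⟨ψ̂^k(χ), θ⟩ equals ⟨χ, ψ^k(θ)⟩, where ψ^k(θ)(τ) = θ(τ^k) is the k-th Adams operation. -/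
open Finset

theorem Finset.sum_fiberwise_mul {ι κ R : Type*} [Fintype κ] [DecidableEq κ]
    [NonUnitalNonAssocSemiring R] (s : Finset ι) (g : ι → κ) (f : ι → R) (h : κ → R) :
    ∑ j, (∑ i ∈ s with g i = j, f i) * h j = ∑ i ∈ s, f i * h (g i) := by
  calc ∑ j, (∑ i ∈ s with g i = j, f i) * h j
      = ∑ j, ∑ i ∈ s with g i = j, f i * h (g i) := by
        refine sum_congr rfl fun j _ => ?_
        rw [sum_mul]
        exact sum_congr rfl fun i hi => by rw [(mem_filter.mp hi).2]
    _ = ∑ i ∈ s, f i * h (g i) := sum_fiberwise s g _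

/-- Let `Γ` be a finite group, `χ` the character of a complex
representation `V` of `Γ`, and define `ψ̂ᵏ(χ)(γ) = ∑_{τ^k = γ} χ(τ)`. Then for every
character `θ` of a complex representation `W`, we have `⟨ψ̂ᵏ(χ), θ⟩ = ⟨χ, ψᵏ(θ)⟩`, where
`ψᵏ(θ)(τ) = θ(τ^k)` is the `k`-th Adams operation and `⟨α, β⟩ = |Γ|⁻¹ ∑ γ, α(γ)·conj(β(γ))`
is the standard inner product of class functions. -/
theorem stmt5 (Γ : Type) [Group Γ] [Fintype Γ] [DecidableEq Γ] (k : ℕ)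
    (V W : FDRep ℂ Γ) :
    (Fintype.card Γ : ℂ)⁻¹ *
        ∑ γ : Γ, (∑ τ ∈ univ.filter (fun τ => τ ^ k = γ), V.character τ) *
          (starRingEnd ℂ) (W.character γ)
      = (Fintype.card Γ : ℂ)⁻¹ *
        ∑ τ : Γ, V.character τ * (starRingEnd ℂ) (W.character (τ ^ k)) := by
  rw [sum_fiberwise_mul univ (· ^ k) V.character (fun γ => starRingEnd ℂ (W.character γ))]
end

section
/- The Newton polynomials satisfy the composition identity N_i(P_1(X;Y), P_2(X;Y), …, P_i(X;Y)) = N_i(X₁,…,X_i) · N_i(Y₁,…,Y_i), where P_j are the universal polynomials expressing the exterior powers of a tensor product, i.e., determined by Σ P_j(e₁(x),…;e₁(y),…) t^j = Π_{a,b} (1 + x_a y_b t) in terms of the elementary symmetric functions e_j. -/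
open MvPolynomial Finset

private lemma aeval_esymm_inj (R : Type*) [CommRing R] (i : ℕ) :
    Function.Injective (fun p : MvPolynomial (Fin i) R =>
      aeval (fun j : Fin i => esymm (Fin i) R (j + 1)) p) := by
  intro p q h
  apply esymmAlgHom_fin_injective (R := R) (n := i) (m := i) le_rfl
  exact Subtype.ext (by rwa [esymmAlgHom_apply, esymmAlgHom_apply])

/-- Let `N` be the `i`-th Newton polynomial, i.e. the polynomial in `i`
variables (thought of as the elementary symmetric functions) which, for every number `n ≥ i`
of variables, yields the `i`-th power sum when the elementary symmetric polynomials
`e₁, …, e_i` are substituted.  Let `P₁, …, P_i` be the universal polynomials in two sets of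
`i` variables expressing the elementary symmetric functions of the products `(x_a y_b)` in
terms of those of the `x`'s and of the `y`'s (determined by
`P_j(e₁(x), …; e₁(y), …) = e_j(x_a y_b)` for all numbers of variables).  Then
`N_i(P₁(X;Y), …, P_i(X;Y)) = N_i(X₁,…,X_i) · N_i(Y₁,…,Y_i)`. -/
theorem stmt11 (i : ℕ) (hi : 1 ≤ i)
    (N : MvPolynomial (Fin i) ℤ)
    (hN : ∀ n : ℕ, i ≤ n →
      aeval (fun j : Fin i => esymm (Fin n) ℤ (j + 1)) N = psum (Fin n) ℤ i)
    (P : Fin i → MvPolynomial (Fin i ⊕ Fin i) ℤ)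
    (hP : ∀ n m : ℕ, ∀ j : Fin i,
      aeval
        (Sum.elim (fun a : Fin i => rename Sum.inl (esymm (Fin n) ℤ (a + 1)))
                  (fun b : Fin i => rename Sum.inr (esymm (Fin m) ℤ (b + 1))))
        (P j)
      = ∑ s ∈ (univ : Finset (Fin n × Fin m)).powersetCard (j + 1),
          ∏ p ∈ s, (X (Sum.inl p.1) * X (Sum.inr p.2) :
            MvPolynomial (Fin n ⊕ Fin m) ℤ)) :
    aeval P N = rename Sum.inl N * rename Sum.inr N := by
  classical
  let φ : MvPolynomial (Fin i ⊕ Fin i) ℤ →ₐ[ℤ] MvPolynomial (Fin i ⊕ Fin i) ℤ :=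
    aeval (Sum.elim (fun a : Fin i => rename Sum.inl (esymm (Fin i) ℤ (a + 1)))
                    (fun b : Fin i => rename Sum.inr (esymm (Fin i) ℤ (b + 1))))
  -- injectivity of φ
  let E := sumAlgEquiv ℤ (Fin i) (Fin i)
  let Aa : MvPolynomial (Fin i) ℤ →ₐ[ℤ] MvPolynomial (Fin i) ℤ :=
    aeval (fun j : Fin i => esymm (Fin i) ℤ (j + 1))
  let ψ : MvPolynomial (Fin i) (MvPolynomial (Fin i) ℤ)
      →ₐ[MvPolynomial (Fin i) ℤ] MvPolynomial (Fin i) (MvPolynomial (Fin i) ℤ) :=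
    aeval (fun j : Fin i => esymm (Fin i) (MvPolynomial (Fin i) ℤ) (j + 1))
  have hconj : E.toAlgHom.comp φ
      = ((ψ.restrictScalars ℤ).comp (mapAlgHom Aa)).comp E.toAlgHom := by
    apply algHom_ext
    rintro (a | b) <;>
      simp [φ, E, Aa, ψ, esymm, map_sum, map_prod]
  have hφinj : Function.Injective φ := by
    intro p q h
    have h2 : ψ ((mapAlgHom Aa) (E p)) = ψ ((mapAlgHom Aa) (E q)) := by
      have := congrArg (fun f => f p) hconj
      have h4 := congrArg (fun f => f q) hconj
      simp only [AlgHom.coe_comp, Function.comp_apply, AlgEquiv.toAlgHom_eq_coe,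
        AlgHom.coe_coe, AlgHom.coe_restrictScalars'] at this h4
      rw [h] at this
      exact this.symm.trans h4
    have h3 : (mapAlgHom Aa) (E p) = (mapAlgHom Aa) (E q) :=
      aeval_esymm_inj (MvPolynomial (Fin i) ℤ) i h2
    have h3' : MvPolynomial.map Aa.toRingHom (E p) = MvPolynomial.map Aa.toRingHom (E q) := h3
    exact E.injective (map_injective Aa.toRingHom (aeval_esymm_inj ℤ i) h3')
  apply hφinj
  -- the product map
  let g : MvPolynomial (Fin i × Fin i) ℤ →ₐ[ℤ] MvPolynomial (Fin i ⊕ Fin i) ℤ :=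
    aeval (fun p : Fin i × Fin i => X (Sum.inl p.1) * X (Sum.inr p.2))
  have hii : i ≤ i * i := by nlinarith
  have hesymmN : aeval (fun j : Fin i => esymm (Fin i × Fin i) ℤ (j + 1)) N
      = psum (Fin i × Fin i) ℤ i := by
    let e : Fin (i * i) ≃ Fin i × Fin i := finProdFinEquiv.symm
    have key : rename e (aeval (fun j : Fin i => esymm (Fin (i * i)) ℤ (j + 1)) N)
        = aeval (fun j : Fin i => esymm (Fin i × Fin i) ℤ (j + 1)) N := by
      rw [comp_aeval_apply]
      simp_rw [rename_esymm]
    rw [← key, hN (i * i) hii, rename_psum]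
  have hLHS : φ (aeval P N)
      = ∑ p : Fin i × Fin i, (X (Sum.inl p.1) * X (Sum.inr p.2) :
          MvPolynomial (Fin i ⊕ Fin i) ℤ) ^ i := by
    rw [comp_aeval_apply]
    have step : (fun j : Fin i => φ (P j))
        = fun j : Fin i => g (esymm (Fin i × Fin i) ℤ (j + 1)) := by
      funext j
      rw [show φ (P j) = _ from hP i i j]
      simp [g, esymm, map_sum, map_prod]
    have hc := comp_aeval_apply (f := fun j : Fin i => esymm (Fin i × Fin i) ℤ (j + 1)) g N
    rw [step, ← hc, hesymmN]
    simp [g, psum, map_sum]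
  have hRHS : φ (rename Sum.inl N * rename Sum.inr N)
      = rename Sum.inl (psum (Fin i) ℤ i) * rename Sum.inr (psum (Fin i) ℤ i) := by
    rw [map_mul]
    congr 1
    · show (aeval _) ((rename Sum.inl) N) = _
      rw [aeval_rename]
      have : (Sum.elim (fun a : Fin i => rename Sum.inl (esymm (Fin i) ℤ (a + 1)))
          (fun b : Fin i => rename Sum.inr (esymm (Fin i) ℤ (b + 1))) ∘ Sum.inl)
          = fun a : Fin i => rename Sum.inl (esymm (Fin i) ℤ (a + 1)) := rfl
      have hc := comp_aeval_apply (f := fun a : Fin i => esymm (Fin i) ℤ (a + 1))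
        (rename (Sum.inl : Fin i → Fin i ⊕ Fin i)) N
      rw [this, ← hc, hN i le_rfl]
    · show (aeval _) ((rename Sum.inr) N) = _
      rw [aeval_rename]
      have : (Sum.elim (fun a : Fin i => rename Sum.inl (esymm (Fin i) ℤ (a + 1)))
          (fun b : Fin i => rename Sum.inr (esymm (Fin i) ℤ (b + 1))) ∘ Sum.inr)
          = fun b : Fin i => rename Sum.inr (esymm (Fin i) ℤ (b + 1)) := rfl
      have hc := comp_aeval_apply (f := fun a : Fin i => esymm (Fin i) ℤ (a + 1))
        (rename (Sum.inr : Fin i → Fin i ⊕ Fin i)) N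
      rw [this, ← hc, hN i le_rfl]
  rw [hLHS, hRHS]
  rw [show rename (R := ℤ) Sum.inl (psum (Fin i) ℤ i)
      = ∑ a : Fin i, (X (Sum.inl a) : MvPolynomial (Fin i ⊕ Fin i) ℤ) ^ i by
    simp [psum, map_sum]]
  rw [show rename (R := ℤ) Sum.inr (psum (Fin i) ℤ i)
      = ∑ b : Fin i, (X (Sum.inr b) : MvPolynomial (Fin i ⊕ Fin i) ℤ) ^ i by
    simp [psum, map_sum]]
  rw [Finset.sum_mul_sum, ← Finset.univ_product_univ, Finset.sum_product]
  simp [mul_pow]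
end

section
/- Let D be a squarefree integer with D ≢ 1 mod 4, N = ℚ(√D), O_N = ℤ[√D], and Γ = Gal(N/ℚ) = {1, γ} with γ(√D) = −√D. Then the sequence 0 → O_N → 𝔇^{-1} → Ω → 0, where the second map sends a·(2√D)^{-1} ↦ a·d(√D), is an exact sequence of Γ-modules over O_N; in particular Ω^1_{O_N/ℤ} ≅ 𝔇^{-1}/O_N as O_N-modules with Γ-action. -/
/-!
Since `ℤ√d` is generated by `√d` as a ring, `d(a + b√d) = b • d√d`, so `Ω` is the cyclic module
generated by `d√d`; differentiating `√d * √d = d` gives the relation `2√d • d√d = 0`. That there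
is no other relation is witnessed by the derivation `a + b√d ↦ b mod 2√d` into `ℤ√d ⧸ (2√d)`,
which is a derivation precisely because `(xy).im - x • y.im - y • x.im = -2√d · x.im · y.im`.
Finally `γ(√d) = -√d`, so the functorial action of `γ` sends `a • d√d` to `-γ(a) • d√d`.
-/

namespace Zsqrtd

open KaehlerDifferential

variable {d : ℤ}

theorem star_sqrtd : star (sqrtd : ℤ√d) = -sqrtd := by
  ext <;> simp

theorem kaehlerD_eq_im_smul_D_sqrtd (x : ℤ√d) :
    D ℤ (ℤ√d) x = (x.im : ℤ√d) • D ℤ (ℤ√d) sqrtd := by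
  conv_lhs => rw [show x = ⟨x.re, x.im⟩ from rfl, decompose]
  simp [Derivation.leibniz]

variable (d) in
def imModTwoSqrtd : Derivation ℤ (ℤ√d) (ℤ√d ⧸ Ideal.span {2 * sqrtd}) :=
  Derivation.mk'
    (AddMonoidHom.mk' (fun x : ℤ√d ↦ Ideal.Quotient.mk _ (x.im : ℤ√d))
      (fun x y ↦ by simp)).toIntLinearMap
    (fun x y ↦ by
      simp only [AddMonoidHom.coe_toIntLinearMap, AddMonoidHom.mk'_apply, ← Ideal.Quotient.mk_eq_mk,
        ← Submodule.Quotient.mk_smul, ← Submodule.Quotient.mk_add]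
      rw [Submodule.Quotient.eq, Ideal.mem_span_singleton']
      exact ⟨-(x.im * y.im : ℤ), by ext <;> simp <;> ring⟩)

theorem imModTwoSqrtd_apply (x : ℤ√d) :
    imModTwoSqrtd d x = Ideal.Quotient.mk _ (x.im : ℤ√d) :=
  rfl

theorem toSpanSingleton_D_sqrtd_surjective :
    Function.Surjective (LinearMap.toSpanSingleton (ℤ√d) (Ω[ℤ√d⁄ℤ]) (D ℤ (ℤ√d) sqrtd)) := by
  rw [← LinearMap.range_eq_top, ← top_le_iff, ← span_range_derivation ℤ (ℤ√d),
    Submodule.span_le]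
  rintro _ ⟨x, rfl⟩
  exact ⟨x.im, (kaehlerD_eq_im_smul_D_sqrtd x).symm⟩

theorem two_sqrtd_smul_D_sqrtd : (2 * sqrtd : ℤ√d) • D ℤ (ℤ√d) sqrtd = 0 := by
  rw [two_mul, add_smul, ← Derivation.leibniz, dmuld, Derivation.map_intCast]

theorem ker_toSpanSingleton_D_sqrtd :
    LinearMap.ker (LinearMap.toSpanSingleton (ℤ√d) (Ω[ℤ√d⁄ℤ]) (D ℤ (ℤ√d) sqrtd)) =
      Ideal.span {2 * sqrtd} := by
  refine _root_.le_antisymm (fun a ha ↦ ?_) ?_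
  · have h := congr_arg (imModTwoSqrtd d).liftKaehlerDifferential ha
    rw [LinearMap.toSpanSingleton_apply, map_smul, Derivation.liftKaehlerDifferential_comp_D,
      imModTwoSqrtd_apply, map_zero] at h
    simpa [← Ideal.Quotient.mk_eq_mk, ← Submodule.Quotient.mk_smul,
      Ideal.Quotient.eq_zero_iff_mem] using h
  · rw [Ideal.span_le, Set.singleton_subset_iff]
    exact two_sqrtd_smul_D_sqrtd

theorem map_smul_D_sqrtd_of_map_smul_D {g : Ω[ℤ√d⁄ℤ] →+ Ω[ℤ√d⁄ℤ]}
    (hg : ∀ r x : ℤ√d, g (r • D ℤ (ℤ√d) x) = star r • D ℤ (ℤ√d) (star x)) (a : ℤ√d) :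
    g (a • D ℤ (ℤ√d) sqrtd) = -star a • D ℤ (ℤ√d) sqrtd := by
  rw [hg, star_sqrtd, map_neg, smul_neg, neg_smul]

end Zsqrtd

theorem stmt14_general (D : ℤ)
    (f : Zsqrtd D →ₗ[Zsqrtd D] KaehlerDifferential ℤ (Zsqrtd D))
    (hf : f = LinearMap.toSpanSingleton (Zsqrtd D) (KaehlerDifferential ℤ (Zsqrtd D))
        ((KaehlerDifferential.D ℤ (Zsqrtd D)) Zsqrtd.sqrtd)) :
    Function.Surjective f ∧
    LinearMap.ker f = Ideal.span {(2 : Zsqrtd D) * Zsqrtd.sqrtd} ∧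
    ∀ g : KaehlerDifferential ℤ (Zsqrtd D) →+ KaehlerDifferential ℤ (Zsqrtd D),
      (∀ (r x : Zsqrtd D), g (r • (KaehlerDifferential.D ℤ (Zsqrtd D)) x)
          = star r • (KaehlerDifferential.D ℤ (Zsqrtd D)) (star x)) →
      ∀ a : Zsqrtd D, g (f a) = f (-(star a)) := by
  subst hf
  exact ⟨Zsqrtd.toSpanSingleton_D_sqrtd_surjective, Zsqrtd.ker_toSpanSingleton_D_sqrtd,
    fun g hg a ↦ Zsqrtd.map_smul_D_sqrtd_of_map_smul_D hg a⟩

/-- Let `D` be a squarefree integer with `D ≢ 1 mod 4`, `N = ℚ(√D)`,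
`O_N = ℤ[√D]`, and `Γ = Gal(N/ℚ) = {1, γ}` with `γ(√D) = -√D` (conjugation, i.e. `star` on
`ℤ√D`). The different is `𝔇 = (2√D)`.  Identifying the inverse different `𝔇⁻¹` with `O_N`
via multiplication by `2√D` (under which the inclusion `O_N ⊆ 𝔇⁻¹` becomes multiplication
by `2√D`, and the Galois action becomes `a ↦ -star a`), the sequence
`0 → O_N → 𝔇⁻¹ → Ω → 0`, `a·(2√D)⁻¹ ↦ a·d(√D)`, is an exact sequence of `Γ`-modules over
`O_N`; in particular `Ω¹_{O_N/ℤ} ≅ 𝔇⁻¹/O_N` equivariantly.  Concretely, the map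
`f : O_N → Ω`, `a ↦ a • d(√D)`, is surjective, has kernel the ideal `(2√D)`, and is
`Γ`-equivariant: for any additive map `g : Ω → Ω` with `g(r • dx) = star r • d(star x)`
(the functorial action of `γ` on `Ω`), one has `g (f a) = f (-(star a))`. -/
theorem stmt14 (D : ℤ) (hD : Squarefree D) (hD4 : D % 4 ≠ 1)
    (f : Zsqrtd D →ₗ[Zsqrtd D] KaehlerDifferential ℤ (Zsqrtd D))
    (hf : f = LinearMap.toSpanSingleton (Zsqrtd D) (KaehlerDifferential ℤ (Zsqrtd D))
        ((KaehlerDifferential.D ℤ (Zsqrtd D)) Zsqrtd.sqrtd)) :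
    Function.Surjective f ∧
    LinearMap.ker f = Ideal.span {(2 : Zsqrtd D) * Zsqrtd.sqrtd} ∧
    ∀ g : KaehlerDifferential ℤ (Zsqrtd D) →+ KaehlerDifferential ℤ (Zsqrtd D),
      (∀ (r x : Zsqrtd D), g (r • (KaehlerDifferential.D ℤ (Zsqrtd D)) x)
          = star r • (KaehlerDifferential.D ℤ (Zsqrtd D)) (star x)) →
      ∀ a : Zsqrtd D, g (f a) = f (-(star a)) :=
  stmt14_general D f hf
end

section
/- Let O be a Dedekind domain, Γ a finite group, and let M₁ ⊆ N₁, M₂ ⊆ N₂ be inclusions of O-lattices with Γ-action (finitely generated O-projective O#Γ-modules) such that N₁/M₁ and N₂/M₂ are torsion O-modules with coprime annihilators. Then ([N₁] − [M₁])·([N₂] − [M₂]) = 0 in the Grothendieck group K₀ of finitely generated O-projective OΓ-modules, where the product is induced by the tensor product over O with diagonal Γ-action. -/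
open CategoryTheory MonoidalCategory Limits
open TensorProduct

set_option linter.unusedSectionVars false

namespace Stmt16Aux

section core
variable {O : Type} [CommRing O]
  {M₁ N₁ M₂ N₂ : Type} [AddCommGroup M₁] [Module O M₁] [AddCommGroup N₁] [Module O N₁]
  [AddCommGroup M₂] [Module O M₂] [AddCommGroup N₂] [Module O N₂]

lemma smul_mem_range_rTensor (f : M₁ →ₗ[O] N₁) {a : O} (ha : ∀ n, ∃ m, f m = a • n)
    (C : Type) [AddCommGroup C] [Module O C] (x : N₁ ⊗[O] C) :
    a • x ∈ LinearMap.range (f.rTensor C) := by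
  induction x using TensorProduct.induction_on with
  | zero => simp
  | tmul n c =>
      obtain ⟨m, hm⟩ := ha n
      exact ⟨m ⊗ₜ c, by rw [LinearMap.rTensor_tmul, hm, TensorProduct.smul_tmul']⟩
  | add x y hx hy => rw [smul_add]; exact Submodule.add_mem _ hx hy

lemma smul_mem_range_lTensor (f : M₂ →ₗ[O] N₂) {b : O} (hb : ∀ n, ∃ m, f m = b • n)
    (C : Type) [AddCommGroup C] [Module O C] (x : C ⊗[O] N₂) :
    b • x ∈ LinearMap.range (f.lTensor C) := by
  induction x using TensorProduct.induction_on with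
  | zero => simp
  | tmul c n =>
      obtain ⟨m, hm⟩ := hb n
      exact ⟨c ⊗ₜ m, by rw [LinearMap.lTensor_tmul, hm, TensorProduct.tmul_smul]⟩
  | add x y hx hy => rw [smul_add]; exact Submodule.add_mem _ hx hy

variable [Module.Flat O M₁] [Module.Flat O N₁] [Module.Flat O N₂]
  (f₁ : M₁ →ₗ[O] N₁) (f₂ : M₂ →ₗ[O] N₂)

variable (h₁ : Function.Injective f₁) (h₂ : Function.Injective f₂)
  {a b : O} (hab : a + b = 1)
  (ha : ∀ n, ∃ m, f₁ m = a • n) (hb : ∀ n, ∃ m, f₂ m = b • n)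

include h₂ in
lemma core_inj :
    Function.Injective ((f₂.lTensor M₁).prod (f₁.rTensor M₂)) := by
  have := Module.Flat.lTensor_preserves_injective_linearMap (M := M₁) f₂ h₂
  intro x y hxy
  exact this (congrArg Prod.fst hxy)

include hab ha hb in
lemma core_surj (x : N₁ ⊗[O] N₂) :
    ∃ u v, f₁.rTensor N₂ u - f₂.lTensor N₁ v = x := by
  obtain ⟨u, hu⟩ := smul_mem_range_rTensor f₁ ha N₂ x
  obtain ⟨w, hw⟩ := smul_mem_range_lTensor f₂ hb N₁ x
  exact ⟨u, -w, by rw [map_neg, sub_neg_eq_add, hu, hw, ← add_smul, hab, one_smul]⟩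

include h₁ h₂ hab ha hb in
lemma core_mid (u : M₁ ⊗[O] N₂) (v : N₁ ⊗[O] M₂)
    (huv : f₁.rTensor N₂ u = f₂.lTensor N₁ v) :
    ∃ w, f₂.lTensor M₁ w = u ∧ f₁.rTensor M₂ w = v := by
  have inj₁ : Function.Injective (f₁.rTensor N₂) :=
    Module.Flat.rTensor_preserves_injective_linearMap f₁ h₁
  have inj₂ : Function.Injective (f₂.lTensor N₁) :=
    Module.Flat.lTensor_preserves_injective_linearMap f₂ h₂
  obtain ⟨w₂, hw₂⟩ := smul_mem_range_lTensor f₂ hb M₁ u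
  obtain ⟨w₁, hw₁⟩ := smul_mem_range_rTensor f₁ ha M₂ v
  have key : f₂.lTensor M₁ w₁ = a • u := by
    apply inj₁
    have e1 : f₁.rTensor N₂ (f₂.lTensor M₁ w₁) = f₂.lTensor N₁ (f₁.rTensor M₂ w₁) := by
      rw [← LinearMap.comp_apply, ← LinearMap.comp_apply,
        LinearMap.rTensor_comp_lTensor, LinearMap.lTensor_comp_rTensor]
    rw [e1, hw₁, map_smul, map_smul, ← huv]
  refine ⟨w₁ + w₂, ?_, ?_⟩
  · rw [map_add, key, hw₂, ← add_smul, hab, one_smul]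
  · apply inj₂
    have e1 : f₂.lTensor N₁ (f₁.rTensor M₂ (w₁ + w₂)) = f₁.rTensor N₂ (f₂.lTensor M₁ (w₁ + w₂)) := by
      rw [← LinearMap.comp_apply, ← LinearMap.comp_apply,
        LinearMap.rTensor_comp_lTensor, LinearMap.lTensor_comp_rTensor]
    rw [e1, map_add, key, hw₂, ← add_smul, hab, one_smul, huv]

end core

section helpers
variable {O : Type} [CommRing O]
  {M N C : Type} [AddCommGroup M] [Module O M] [AddCommGroup N] [Module O N]
  [AddCommGroup C] [Module O C]

lemma rTensor_map_comm (f : M →ₗ[O] N) (α : M →ₗ[O] M) (β : N →ₗ[O] N) (γ : C →ₗ[O] C)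
    (h : ∀ m, f (α m) = β (f m)) (x : M ⊗[O] C) :
    f.rTensor C (TensorProduct.map α γ x) = TensorProduct.map β γ (f.rTensor C x) := by
  induction x using TensorProduct.induction_on with
  | zero => simp
  | tmul m c => simp [h m]
  | add x y hx hy => simp [hx, hy]

lemma lTensor_map_comm (f : M →ₗ[O] N) (α : M →ₗ[O] M) (β : N →ₗ[O] N) (γ : C →ₗ[O] C)
    (h : ∀ m, f (α m) = β (f m)) (x : C ⊗[O] M) :
    f.lTensor C (TensorProduct.map γ α x) = TensorProduct.map γ β (f.lTensor C x) := by
  induction x using TensorProduct.induction_on with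
  | zero => simp
  | tmul c m => simp [h m]
  | add x y hx hy => simp [hx, hy]

end helpers

section glue
variable {O : Type} [CommRing O] {Γ : Type} [Group Γ]

/-- product of two representations -/
noncomputable def prodRep (A B : Rep O Γ) : Rep O Γ :=
  Rep.of (X := A × B)
    { toFun := fun g => (A.ρ g).prodMap (B.ρ g)
      map_one' := by ext x <;> simp
      map_mul' := fun g h => by ext x <;> simp }

@[simp] lemma prodRep_ρ (A B : Rep O Γ) (g : Γ) (x : A × B) :
    (prodRep A B).ρ g x = (A.ρ g x.1, B.ρ g x.2) := rfl

noncomputable def inlHom (A B : Rep O Γ) : A ⟶ prodRep A B :=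
  ConcreteCategory.ofHom (C := Rep O Γ) ⟨LinearMap.inl O A B, fun g => by
    refine LinearMap.ext fun x => ?_
    show (LinearMap.inl O A B) (A.ρ g x) = (prodRep A B).ρ g (x, 0)
    simp [Prod.ext_iff]⟩

noncomputable def sndHom (A B : Rep O Γ) : prodRep A B ⟶ B :=
  ConcreteCategory.ofHom (C := Rep O Γ) ⟨LinearMap.snd O A B, fun g => by
    refine LinearMap.ext fun x => ?_
    show B.ρ g x.2 = B.ρ g x.2
    rfl⟩

lemma rep_mono_injective {A B : Rep O Γ} (f : A ⟶ B) [Mono f] :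
    Function.Injective f.hom := by
  exact (Rep.mono_iff_injective f).1 inferInstance

lemma exists_of_annihilator {A B : Rep O Γ} (f : A ⟶ B) [Mono f] {a : O}
    (ha : a ∈ Module.annihilator O ((cokernel f : Rep O Γ))) :
    ∀ n : B, ∃ m : A, f.hom m = a • n := by
  have hz : (a • 𝟙 B) ≫ cokernel.π f = 0 := by
    ext n
    show (cokernel.π f).hom (a • n) = 0
    rw [map_smul]
    exact Module.mem_annihilator.1 ha _
  intro n
  refine ⟨(Abelian.monoLift f (a • 𝟙 B) hz).hom n, ?_⟩
  calc f.hom ((Abelian.monoLift f (a • 𝟙 B) hz).hom n)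
      = ((Abelian.monoLift f (a • 𝟙 B) hz) ≫ f).hom n := rfl
    _ = a • n := by rw [Abelian.monoLift_comp]; rfl

lemma repShortExact (S : ShortComplex (Rep O Γ))
    (h1 : Function.Injective S.f.hom)
    (h2 : ∀ x, S.g.hom x = 0 → x ∈ LinearMap.range S.f.hom.toLinearMap)
    (h3 : Function.Surjective S.g.hom) : S.ShortExact := by
  let F := forget₂ (Rep O Γ) (ModuleCat O)
  have hmono : Mono (F.map S.f) := (ModuleCat.mono_iff_injective _).2 h1
  have hepi : Epi (F.map S.g) := (ModuleCat.epi_iff_surjective _).2 h3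
  have hmono' : Mono S.f := F.mono_of_mono_map hmono
  have hepi' : Epi S.g := F.epi_of_epi_map hepi
  refine ⟨?_⟩
  rw [← S.exact_map_iff_of_faithful F]
  rw [ShortComplex.moduleCat_exact_iff]
  intro x hx
  exact h2 x hx

variable {M₁ N₁ M₂ N₂ : Rep O Γ} (f₁ : M₁ ⟶ N₁) (f₂ : M₂ ⟶ N₂)

lemma rTensor_comm_apply (C : Rep O Γ) (g : Γ) (x : TensorProduct O M₁ C) :
    f₁.hom.toLinearMap.rTensor C ((M₁ ⊗ C : Rep O Γ).ρ g x) =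
      (N₁ ⊗ C : Rep O Γ).ρ g (f₁.hom.toLinearMap.rTensor C x) := by
  induction x using TensorProduct.induction_on with
  | zero => simp
  | tmul m c =>
      change f₁.hom (M₁.ρ g m) ⊗ₜ[O] (C.ρ g c) = N₁.ρ g (f₁.hom m) ⊗ₜ[O] (C.ρ g c)
      rw [Rep.hom_comm_apply f₁ g m]
  | add x y hx hy => simp only [map_add, hx, hy]

lemma lTensor_comm_apply (C : Rep O Γ) (g : Γ) (x : TensorProduct O C M₂) :
    f₂.hom.toLinearMap.lTensor C ((C ⊗ M₂ : Rep O Γ).ρ g x) =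
      (C ⊗ N₂ : Rep O Γ).ρ g (f₂.hom.toLinearMap.lTensor C x) := by
  induction x using TensorProduct.induction_on with
  | zero => simp
  | tmul c m =>
      change (C.ρ g c) ⊗ₜ[O] f₂.hom (M₂.ρ g m) = (C.ρ g c) ⊗ₜ[O] N₂.ρ g (f₂.hom m)
      rw [Rep.hom_comm_apply f₂ g m]
  | add x y hx hy => simp only [map_add, hx, hy]

/-- the map `M₁ ⊗ M₂ → (M₁ ⊗ N₂) × (N₁ ⊗ M₂)`. -/
noncomputable def phiHom :
    (M₁ ⊗ M₂ : Rep O Γ) ⟶ prodRep (M₁ ⊗ N₂) (N₁ ⊗ M₂) :=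
  ConcreteCategory.ofHom (C := Rep O Γ) ⟨((f₂.hom.toLinearMap.lTensor M₁).prod (f₁.hom.toLinearMap.rTensor M₂) :
    TensorProduct O M₁ M₂ →ₗ[O] TensorProduct O M₁ N₂ × TensorProduct O N₁ M₂), fun g => by
    refine LinearMap.ext fun (x : TensorProduct O M₁ M₂) => ?_
    change (f₂.hom.toLinearMap.lTensor M₁ ((M₁ ⊗ M₂ : Rep O Γ).ρ g x),
        f₁.hom.toLinearMap.rTensor M₂ ((M₁ ⊗ M₂ : Rep O Γ).ρ g x)) =
      ((M₁ ⊗ N₂ : Rep O Γ).ρ g (f₂.hom.toLinearMap.lTensor M₁ x),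
        (N₁ ⊗ M₂ : Rep O Γ).ρ g (f₁.hom.toLinearMap.rTensor M₂ x))
    exact Prod.ext (lTensor_comm_apply f₂ M₁ g x) (rTensor_comm_apply f₁ M₂ g x)⟩

/-- the map `(M₁ ⊗ N₂) × (N₁ ⊗ M₂) → N₁ ⊗ N₂`. -/
noncomputable def psiHom :
    prodRep (M₁ ⊗ N₂) (N₁ ⊗ M₂) ⟶ (N₁ ⊗ N₂ : Rep O Γ) :=
  ConcreteCategory.ofHom (C := Rep O Γ) ⟨((f₁.hom.toLinearMap.rTensor N₂).coprod (-(f₂.hom.toLinearMap.lTensor N₁)) :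
    TensorProduct O M₁ N₂ × TensorProduct O N₁ M₂ →ₗ[O] TensorProduct O N₁ N₂), fun g => by
    refine LinearMap.ext fun (x : TensorProduct O M₁ N₂ × TensorProduct O N₁ M₂) => ?_
    obtain ⟨u, v⟩ := x
    set rT : TensorProduct O M₁ N₂ →ₗ[O] TensorProduct O N₁ N₂ := f₁.hom.toLinearMap.rTensor N₂ with hrT
    set lT : TensorProduct O N₁ M₂ →ₗ[O] TensorProduct O N₁ N₂ := f₂.hom.toLinearMap.lTensor N₁ with hlT
    change rT ((M₁ ⊗ N₂ : Rep O Γ).ρ g u) + -(lT ((N₁ ⊗ M₂ : Rep O Γ).ρ g v)) =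
      (N₁ ⊗ N₂ : Rep O Γ).ρ g (rT u + -(lT v))
    rw [map_add, map_neg]
    exact congrArg₂ (· + ·) (rTensor_comm_apply f₁ N₂ g u)
      (congrArg Neg.neg (lTensor_comm_apply f₂ N₁ g v))⟩

end glue

end Stmt16Aux


set_option maxHeartbeats 2000000 in
open Stmt16Aux in
/-- Let `O` be a Dedekind domain, `Γ` a finite group, and
`M₁ ⊆ N₁, M₂ ⊆ N₂` inclusions of `O`-lattices with `Γ`-action (finitely generated
`O`-projective `O#Γ`-modules, i.e. objects of `Rep O Γ` that are finite projective over
`O`) such that `N₁/M₁` and `N₂/M₂` are torsion `O`-modules with coprime annihilators.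
Then `([N₁] − [M₁])·([N₂] − [M₂]) = 0` in the Grothendieck group `K₀` of finitely generated
`O`-projective `OΓ`-modules, where the product is induced by the tensor product over `O`
with the diagonal `Γ`-action: i.e. for every additive-group-valued invariant `χ` that is
invariant under isomorphism and additive on short exact sequences of such modules, one has
`χ(N₁ ⊗ N₂) − χ(M₁ ⊗ N₂) − χ(N₁ ⊗ M₂) + χ(M₁ ⊗ M₂) = 0`. -/
theorem stmt16 (O : Type) [CommRing O] [IsDedekindDomain O]
    (Γ : Type) [Group Γ] [Fintype Γ]
    (G : Type) [AddCommGroup G] (χ : Rep O Γ → G)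
    (hiso : ∀ X Y : Rep O Γ, (X ≅ Y) → χ X = χ Y)
    (hadd : ∀ S : ShortComplex (Rep O Γ), S.ShortExact →
      Module.Projective O S.X₁ → Module.Finite O S.X₁ →
      Module.Projective O S.X₂ → Module.Finite O S.X₂ →
      Module.Projective O S.X₃ → Module.Finite O S.X₃ →
      χ S.X₂ = χ S.X₁ + χ S.X₃)
    (M₁ N₁ M₂ N₂ : Rep O Γ)
    (hM₁ : Module.Projective O M₁) (hM₁f : Module.Finite O M₁)
    (hN₁ : Module.Projective O N₁) (hN₁f : Module.Finite O N₁)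
    (hM₂ : Module.Projective O M₂) (hM₂f : Module.Finite O M₂)
    (hN₂ : Module.Projective O N₂) (hN₂f : Module.Finite O N₂)
    (f₁ : M₁ ⟶ N₁) (f₂ : M₂ ⟶ N₂) [Mono f₁] [Mono f₂]
    (htor₁ : Module.annihilator O ((cokernel f₁ : Rep O Γ)) ≠ ⊥)
    (htor₂ : Module.annihilator O ((cokernel f₂ : Rep O Γ)) ≠ ⊥)
    (hcop : Module.annihilator O ((cokernel f₁ : Rep O Γ)) ⊔ Module.annihilator O ((cokernel f₂ : Rep O Γ)) = ⊤) :
    χ (N₁ ⊗ N₂) - χ (M₁ ⊗ N₂) - χ (N₁ ⊗ M₂) + χ (M₁ ⊗ M₂) = 0 := by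
  classical
  haveI := hM₁; haveI := hN₁; haveI := hM₂; haveI := hN₂
  haveI := hM₁f; haveI := hN₁f; haveI := hM₂f; haveI := hN₂f
  haveI : Module.Flat O M₁ := inferInstance
  haveI : Module.Flat O N₁ := inferInstance
  haveI : Module.Flat O N₂ := inferInstance
  haveI : Module.Flat O M₁.V := inferInstanceAs (Module.Flat O ((M₁ : Rep O Γ) : Type))
  haveI : Module.Flat O N₁.V := inferInstanceAs (Module.Flat O ((N₁ : Rep O Γ) : Type))
  haveI : Module.Flat O N₂.V := inferInstanceAs (Module.Flat O ((N₂ : Rep O Γ) : Type))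
  have inj₁ : Function.Injective f₁.hom := rep_mono_injective f₁
  have inj₂ : Function.Injective f₂.hom := rep_mono_injective f₂
  have h1 : (1 : O) ∈ Module.annihilator O ((cokernel f₁ : Rep O Γ)) ⊔
      Module.annihilator O ((cokernel f₂ : Rep O Γ)) := by rw [hcop]; trivial
  obtain ⟨a, haI, b, hbI, hab⟩ := Submodule.mem_sup.1 h1
  have ha := exists_of_annihilator f₁ haI
  have hb := exists_of_annihilator f₂ hbI
  -- projectivity / finiteness instances for the objects involved
  haveI pA : Module.Projective O ((M₁ ⊗ N₂ : Rep O Γ) : Type) :=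
    inferInstanceAs (Module.Projective O (TensorProduct O M₁ N₂))
  haveI pB : Module.Projective O ((N₁ ⊗ M₂ : Rep O Γ) : Type) :=
    inferInstanceAs (Module.Projective O (TensorProduct O N₁ M₂))
  haveI pMM : Module.Projective O ((M₁ ⊗ M₂ : Rep O Γ) : Type) :=
    inferInstanceAs (Module.Projective O (TensorProduct O M₁ M₂))
  haveI pNN : Module.Projective O ((N₁ ⊗ N₂ : Rep O Γ) : Type) :=
    inferInstanceAs (Module.Projective O (TensorProduct O N₁ N₂))
  haveI fA : Module.Finite O ((M₁ ⊗ N₂ : Rep O Γ) : Type) :=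
    inferInstanceAs (Module.Finite O (TensorProduct O M₁ N₂))
  haveI fB : Module.Finite O ((N₁ ⊗ M₂ : Rep O Γ) : Type) :=
    inferInstanceAs (Module.Finite O (TensorProduct O N₁ M₂))
  haveI fMM : Module.Finite O ((M₁ ⊗ M₂ : Rep O Γ) : Type) :=
    inferInstanceAs (Module.Finite O (TensorProduct O M₁ M₂))
  haveI fNN : Module.Finite O ((N₁ ⊗ N₂ : Rep O Γ) : Type) :=
    inferInstanceAs (Module.Finite O (TensorProduct O N₁ N₂))
  haveI pP : Module.Projective O ((prodRep (M₁ ⊗ N₂) (N₁ ⊗ M₂) : Rep O Γ) : Type) :=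
    inferInstanceAs (Module.Projective O
      (((M₁ ⊗ N₂ : Rep O Γ) : Type) × ((N₁ ⊗ M₂ : Rep O Γ) : Type)))
  haveI fP : Module.Finite O ((prodRep (M₁ ⊗ N₂) (N₁ ⊗ M₂) : Rep O Γ) : Type) :=
    inferInstanceAs (Module.Finite O
      (((M₁ ⊗ N₂ : Rep O Γ) : Type) × ((N₁ ⊗ M₂ : Rep O Γ) : Type)))
  -- abbreviations for the four tensor maps, with types written uniformly
  set rT : TensorProduct O M₁ N₂ →ₗ[O] TensorProduct O N₁ N₂ := f₁.hom.toLinearMap.rTensor N₂ with hrT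
  set lT : TensorProduct O N₁ M₂ →ₗ[O] TensorProduct O N₁ N₂ := f₂.hom.toLinearMap.lTensor N₁ with hlT
  set rT' : TensorProduct O M₁ M₂ →ₗ[O] TensorProduct O N₁ M₂ := f₁.hom.toLinearMap.rTensor M₂ with hrT'
  set lT' : TensorProduct O M₁ M₂ →ₗ[O] TensorProduct O M₁ N₂ := f₂.hom.toLinearMap.lTensor M₁ with hlT'
  -- first short complex : A → A × B → B
  have zero1 : inlHom (M₁ ⊗ N₂) (N₁ ⊗ M₂) ≫ sndHom (M₁ ⊗ N₂) (N₁ ⊗ M₂) = 0 := by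
    ext x
    show (0 : ((N₁ ⊗ M₂ : Rep O Γ) : Type)) = (0 : _ →ₗ[O] _) x
    simp
  let S1 : ShortComplex (Rep O Γ) := ShortComplex.mk _ _ zero1
  have se1 : S1.ShortExact := by
    refine repShortExact S1 (fun x y h => congrArg Prod.fst h) (fun x hx => ?_)
      (fun y => ⟨(0, y), rfl⟩)
    exact ⟨x.1, Prod.ext rfl hx.symm⟩
  -- the commutation identity
  have comm : ∀ y : TensorProduct O M₁ M₂, rT (lT' y) = lT (rT' y) := by
    intro y
    induction y using TensorProduct.induction_on with
    | zero => simp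
    | tmul m₁ m₂ => rfl
    | add x y hx hy => rw [map_add, map_add, hx, hy, ← map_add, ← map_add]
  -- second short complex : M₁⊗M₂ → A × B → N₁⊗N₂
  have zero2 : phiHom f₁ f₂ ≫ psiHom f₁ f₂ = 0 := by
    ext (x : TensorProduct O M₁ M₂)
    show rT (lT' x) + -(lT (rT' x)) = (0 : _ →ₗ[O] _) x
    rw [comm x, add_neg_cancel]
    exact (LinearMap.zero_apply x).symm
  let S2 : ShortComplex (Rep O Γ) := ShortComplex.mk _ _ zero2
  have se2 : S2.ShortExact := by
    refine repShortExact S2 ?_ ?_ ?_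
    · exact core_inj f₁.hom.toLinearMap f₂.hom.toLinearMap inj₂
    · rintro ⟨u, v⟩ hx
      have hx' : rT u + -(lT v) = 0 := hx
      have huv : rT u = lT v := by rwa [add_neg_eq_zero] at hx'
      obtain ⟨w, hw1, hw2⟩ := core_mid f₁.hom.toLinearMap f₂.hom.toLinearMap inj₁ inj₂ hab ha hb u v huv
      exact ⟨w, Prod.ext hw1 hw2⟩
    · intro x
      obtain ⟨u, v, huv⟩ := core_surj f₁.hom.toLinearMap f₂.hom.toLinearMap hab ha hb x
      refine ⟨(u, v), ?_⟩
      show rT u + -(lT v) = x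
      rw [← sub_eq_add_neg]
      exact huv
  have e1 : χ (prodRep (M₁ ⊗ N₂) (N₁ ⊗ M₂)) = χ (M₁ ⊗ N₂) + χ (N₁ ⊗ M₂) :=
    hadd S1 se1 pA fA pP fP pB fB
  have e2 : χ (prodRep (M₁ ⊗ N₂) (N₁ ⊗ M₂)) = χ (M₁ ⊗ M₂) + χ (N₁ ⊗ N₂) :=
    hadd S2 se2 pMM fMM pP fP pNN fNN
  have e3 : χ (M₁ ⊗ N₂) + χ (N₁ ⊗ M₂) = χ (M₁ ⊗ M₂) + χ (N₁ ⊗ N₂) := e1.symm.trans e2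
  rw [sub_sub, e3]
  abel
end
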